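/- arXiv:1609.07702 — 4 statements merged into one kernel-verified Lean document; each statement's English description precedes it below -/
import Mathlib

section
/- Let w₀ ∈ ℂ with w₀ ≠ 0 and |w₀| ≠ 1. Suppose that for every x ∈ ℝ, the complex number (x² − w₀²)·(x² − 1/w₀²) is real and nonnegative. Then w₀² is a negative real number. -/
open Complex

/-!
Put `w = w₀²`. Already at `x = 1` the hypothesis gives `(1 - w)(1 - w⁻¹) = 2 - (w + w⁻¹) ≥ 0`.
Since `Im (w + w⁻¹) = Im w · (1 - 1/|w|²)` and `|w| ≠ 1`, the number `w` is real, and a real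
`w > 0` with `w + w⁻¹ ≤ 2` would be `1` by AM–GM.
-/

theorem Complex.im_eq_zero_of_im_add_inv_eq_zero {w : ℂ} (hw : ‖w‖ ≠ 1)
    (h : (w + w⁻¹).im = 0) : w.im = 0 := by
  have hnormSq : normSq w ≠ 1 := by
    rwa [normSq_eq_norm_sq, Ne, pow_eq_one_iff_of_nonneg (norm_nonneg w) two_ne_zero]
  rcases eq_or_ne w 0 with rfl | hw0
  · rfl
  have hpos : normSq w ≠ 0 := normSq_eq_zero.not.mpr hw0
  have key : w.im * (normSq w - 1) = 0 := by
    rw [add_im, inv_im] at h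
    field_simp at h
    linear_combination h
  exact (mul_eq_zero.mp key).resolve_right (sub_ne_zero.mpr hnormSq)

theorem Real.eq_one_of_add_inv_le_two {r : ℝ} (hr : 0 < r) (h : r + r⁻¹ ≤ 2) : r = 1 := by
  have hsq : (r - 1) ^ 2 = r * (r + r⁻¹ - 2) := by
    field_simp
    ring
  have hle : (r - 1) ^ 2 ≤ 0 := hsq ▸ mul_nonpos_of_nonneg_of_nonpos hr.le (by linarith)
  exact sub_eq_zero.mp (pow_eq_zero_iff two_ne_zero |>.mp (le_antisymm hle (sq_nonneg _)))

/-- Let `w₀ ∈ ℂ`, `w₀ ≠ 0`, `|w₀| ≠ 1`. If `(x² − w₀²)(x² − 1/w₀²)` is real and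
nonnegative for every real `x`, then `w₀²` is a negative real number. -/
theorem zero_is_purely_imaginary (w₀ : ℂ) (hw0 : w₀ ≠ 0) (habs : ‖w₀‖ ≠ 1)
    (h : ∀ x : ℝ,
      (((x : ℂ) ^ 2 - w₀ ^ 2) * ((x : ℂ) ^ 2 - 1 / w₀ ^ 2)).im = 0 ∧
        0 ≤ (((x : ℂ) ^ 2 - w₀ ^ 2) * ((x : ℂ) ^ 2 - 1 / w₀ ^ 2)).re) :
    (w₀ ^ 2).im = 0 ∧ (w₀ ^ 2).re < 0 := by
  set w := w₀ ^ 2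
  have hw : w ≠ 0 := pow_ne_zero 2 hw0
  have hnorm : ‖w‖ ≠ 1 := by
    rwa [norm_pow, Ne, pow_eq_one_iff_of_nonneg (norm_nonneg w₀) two_ne_zero]
  have at_one : ((1 : ℂ) ^ 2 - w) * ((1 : ℂ) ^ 2 - 1 / w) = 2 - (w + w⁻¹) := by
    field_simp
    ring
  obtain ⟨him, hre⟩ := h 1
  rw [ofReal_one, at_one, sub_im, im_ofNat, zero_sub, neg_eq_zero] at him
  rw [ofReal_one, at_one, sub_re, re_ofNat, sub_nonneg] at hre
  have hw_im : w.im = 0 := Complex.im_eq_zero_of_im_add_inv_eq_zero hnorm him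
  refine ⟨hw_im, not_le.mp fun hw_re => hnorm ?_⟩
  have hw_real : w = (w.re : ℂ) := Complex.ext rfl (by simp [hw_im])
  have hr : 0 < w.re := hw_re.lt_of_ne fun h0 => hw (Complex.ext h0.symm hw_im)
  have hsum : w.re + w.re⁻¹ ≤ 2 := by
    rwa [hw_real, ← ofReal_inv, ← ofReal_add, ofReal_re] at hre
  rw [hw_real, Real.eq_one_of_add_inv_le_two hr hsum, ofReal_one, norm_one]
end

section
/- Let α > 0 and ε > 0. Let S be a function meromorphic on a punctured neighborhood of ε in ℂ, having a pole at ε, and satisfying the algebraic relation (z² − ε²)·S(z)² − (2ε² + α²)·z·S(z) − ε²·z² = 0 for all z ≠ ε in that neighborhood. Then the pole of S at ε is simple, and the function z ↦ (S(z) − z)² − (α² + 2ε²)²/(4(z − ε)²) − α⁴/(4ε(z − ε)) extends holomorphically to a full neighborhood of ε. Equivalently, the Laurent expansion of (S(z) − z)² at z = ε is (α² + 2ε²)²/4 · (z − ε)^{−2} + α⁴/(4ε) · (z − ε)^{−1} + O(1); in particular the residue α⁴/(4ε) is nonzero. -/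
open Complex Filter Function Topology

/-!
Put `T z = (z - ε) S(z)`. Dividing the quadratic relation by `S` expresses `T` through `1 / S`,
which tends to `0` at the pole, so `T → (α² + 2ε²) / 2 ≠ 0`; by Riemann's removable singularity
theorem `T` is analytic at `ε` and the pole of `S` is simple. Multiplied by `z - ε`, the relation
becomes `(z + ε) T² - (2ε² + α²) z T - ε² z² (z - ε) = 0` on a full neighbourhood of `ε`, and
differentiating it at `ε` determines `T'(ε)`. Finally `(S - z)² = P / (z - ε)²` with
`P = (T - z (z - ε))²` analytic, so the Laurent coefficients are `P(ε)` and `P'(ε)`.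
-/

theorem AnalyticAt.dslope {𝕜 E : Type*} [NontriviallyNormedField 𝕜] [NormedAddCommGroup E]
    [NormedSpace 𝕜 E] {f : 𝕜 → E} {a : 𝕜} (hf : AnalyticAt 𝕜 f a) :
    AnalyticAt 𝕜 (dslope f a) a :=
  let ⟨_, hp⟩ := hf
  ⟨_, hp.has_fpower_series_dslope_fslope⟩

theorem div_sq_eq_add_add_dslope_dslope {𝕜 : Type*} [NontriviallyNormedField 𝕜] (f : 𝕜 → 𝕜)
    {a z : 𝕜} (hz : z ≠ a) :
    f z / (z - a) ^ 2 = f a / (z - a) ^ 2 + deriv f a / (z - a) + dslope (dslope f a) a z := by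
  have hza : z - a ≠ 0 := sub_ne_zero.mpr hz
  rw [dslope_of_ne _ hz, slope_def_field, dslope_of_ne _ hz, slope_def_field, dslope_same]
  field_simp
  ring

theorem Complex.analyticAt_update_of_tendsto {E : Type*} [NormedAddCommGroup E]
    [NormedSpace ℂ E] [CompleteSpace E] {f : ℂ → E} {c : ℂ} {y : E}
    (hd : ∀ᶠ z in 𝓝[≠] c, DifferentiableAt ℂ f z) (hf : Tendsto f (𝓝[≠] c) (𝓝 y)) :
    AnalyticAt ℂ (update f c y) c := by
  refine analyticAt_of_differentiable_on_punctured_nhds_of_continuousAt ?_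
    (continuousAt_update_same.mpr hf)
  filter_upwards [hd, self_mem_nhdsWithin] with z hz hne
  refine hz.congr_of_eventuallyEq ?_
  filter_upwards [isOpen_ne.mem_nhds hne] with w hw using update_of_ne hw _ _

theorem Complex.exists_analyticAt_eq_div_sub_of_tendsto {S : ℂ → ℂ} {a k : ℂ}
    (hd : ∀ᶠ z in 𝓝[≠] a, DifferentiableAt ℂ S z)
    (hlim : Tendsto (fun z => (z - a) * S z) (𝓝[≠] a) (𝓝 k)) :
    ∃ T : ℂ → ℂ, AnalyticAt ℂ T a ∧ T a = k ∧ ∀ᶠ z in 𝓝[≠] a, S z = T z / (z - a) := by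
  refine ⟨_, analyticAt_update_of_tendsto ?_ hlim, update_self _ _ _, ?_⟩
  · filter_upwards [hd] with z hz using (differentiableAt_id.sub_const a).mul hz
  · filter_upwards [self_mem_nhdsWithin] with z hz
    rw [update_of_ne hz, mul_div_cancel_left₀ _ (sub_ne_zero.mpr hz)]

section QuadraticSchwarz

variable {ε c : ℂ} {S T : ℂ → ℂ}

theorem tendsto_sub_mul_of_quadratic (hε : ε ≠ 0)
    (hpole : Tendsto (fun z => ‖S z‖) (𝓝[≠] ε) atTop)
    (hrel : ∀ᶠ z in 𝓝[≠] ε, (z ^ 2 - ε ^ 2) * S z ^ 2 - c * z * S z - ε ^ 2 * z ^ 2 = 0) :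
    Tendsto (fun z => (z - ε) * S z) (𝓝[≠] ε) (𝓝 (c / 2)) := by
  have hid : Tendsto (fun z => z) (𝓝[≠] ε) (𝓝 ε) := tendsto_id.mono_left nhdsWithin_le_nhds
  have hinv : Tendsto (fun z => (S z)⁻¹) (𝓝[≠] ε) (𝓝 0) :=
    tendsto_inv₀_cobounded.comp (tendsto_norm_atTop_iff_cobounded.mp hpole)
  have h2ε : ε + ε ≠ 0 := by simpa [← two_mul] using hε
  have hlim : Tendsto (fun z => (c * z + ε ^ 2 * z ^ 2 * (S z)⁻¹) / (z + ε)) (𝓝[≠] ε)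
      (𝓝 ((c * ε + ε ^ 2 * ε ^ 2 * 0) / (ε + ε))) :=
    ((tendsto_const_nhds.mul hid).add ((tendsto_const_nhds.mul (hid.pow 2)).mul hinv)).div
      (hid.add tendsto_const_nhds) h2ε
  rw [show (c * ε + ε ^ 2 * ε ^ 2 * 0) / (ε + ε) = c / 2 by field_simp; ring] at hlim
  refine hlim.congr' ?_
  filter_upwards [hrel, hpole.eventually_gt_atTop 0,
    (hid.add_const ε).eventually_ne h2ε] with z hz hS hzε
  have hS0 : S z ≠ 0 := norm_pos_iff.mp hS
  field_simp
  linear_combination -hz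

theorem eventually_quadratic_of_eq_div (hTε : T ε = c / 2)
    (hST : ∀ᶠ z in 𝓝[≠] ε, S z = T z / (z - ε))
    (hrel : ∀ᶠ z in 𝓝[≠] ε, (z ^ 2 - ε ^ 2) * S z ^ 2 - c * z * S z - ε ^ 2 * z ^ 2 = 0) :
    ∀ᶠ z in 𝓝 ε, (z + ε) * T z ^ 2 - c * z * T z - ε ^ 2 * z ^ 2 * (z - ε) = 0 := by
  rw [← nhdsNE_sup_pure, eventually_sup, eventually_pure]
  refine ⟨?_, by rw [hTε]; ring⟩
  filter_upwards [hST, hrel, self_mem_nhdsWithin] with z hS hz hne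
  have hT : T z = (z - ε) * S z := by
    rw [hS, mul_div_cancel₀ _ (sub_ne_zero.mpr hne)]
  rw [hT]
  linear_combination (z - ε) * hz

theorem deriv_eq_of_quadratic (hT : DifferentiableAt ℂ T ε) (hTε : T ε = c / 2)
    (hrel : ∀ᶠ z in 𝓝 ε, (z + ε) * T z ^ 2 - c * z * T z - ε ^ 2 * z ^ 2 * (z - ε) = 0) :
    ε * c * deriv T ε = c ^ 2 / 4 + ε ^ 4 := by
  have hid := hasDerivAt_id' ε
  have hΦ := ((hid.add_const ε).fun_mul (hT.hasDerivAt.fun_pow 2)).fun_sub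
    ((hid.const_mul c).fun_mul hT.hasDerivAt) |>.fun_sub
    (((hid.fun_pow 2).const_mul (ε ^ 2)).fun_mul (hid.sub_const ε))
  have h0 := hΦ.unique ((hasDerivAt_const ε (0 : ℂ)).congr_of_eventuallyEq hrel)
  rw [hTε] at h0
  push_cast at h0
  linear_combination h0

theorem exists_sq_sub_eq_laurent (hε : ε ≠ 0) (hT : AnalyticAt ℂ T ε) (hTε : T ε = c / 2)
    (hT' : ε * c * deriv T ε = c ^ 2 / 4 + ε ^ 4)
    (hST : ∀ᶠ z in 𝓝[≠] ε, S z = T z / (z - ε)) :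
    ∃ H : ℂ → ℂ, AnalyticAt ℂ H ε ∧ ∀ᶠ z in 𝓝[≠] ε,
      (S z - z) ^ 2 = (c / 2) ^ 2 / (z - ε) ^ 2 + ((c / 2 - ε ^ 2) ^ 2 / ε) / (z - ε) + H z := by
  let P : ℂ → ℂ := fun z => (T z - z * (z - ε)) ^ 2
  have hPan : AnalyticAt ℂ P ε := by fun_prop
  have hPε : P ε = (c / 2) ^ 2 := by simp [P, hTε]
  have hP' : deriv P ε = (c / 2 - ε ^ 2) ^ 2 / ε := by
    have hid := hasDerivAt_id' ε
    rw [((hT.differentiableAt.hasDerivAt.fun_sub (hid.fun_mul (hid.sub_const ε))).fun_pow 2).deriv,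
      hTε]
    field_simp
    linear_combination 4 * hT'
  refine ⟨dslope (dslope P ε) ε, hPan.dslope.dslope, ?_⟩
  filter_upwards [hST, self_mem_nhdsWithin] with z hS hz
  rw [← hPε, ← hP', ← div_sq_eq_add_add_dslope_dslope P hz, hS]
  have hzε : z - ε ≠ 0 := sub_ne_zero.mpr hz
  field_simp
  rfl

end QuadraticSchwarz

/-- The Schwarz function of the Neumann oval near the focus `ε`: if `S` is
analytic on a punctured neighborhood of `ε`, has a pole at `ε`, and satisfies
`(z² − ε²)S(z)² − (2ε² + α²)zS(z) − ε²z² = 0` there, then the pole is simple and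
`(S(z) − z)² = (α²+2ε²)²/4·(z−ε)⁻² + α⁴/(4ε)·(z−ε)⁻¹ + O(1)`; in particular the
residue `α⁴/(4ε)` is nonzero. -/
theorem neumann_oval_schwarz_singularity (α ε : ℝ) (hα : 0 < α) (hε : 0 < ε)
    (U : Set ℂ) (hU : U ∈ nhds (ε : ℂ))
    (S : ℂ → ℂ) (hS : DifferentiableOn ℂ S (U \ {(ε : ℂ)}))
    (hpole : Filter.Tendsto (fun z => ‖S z‖) (nhdsWithin (ε : ℂ) {(ε : ℂ)}ᶜ)
      Filter.atTop)
    (hrel : ∀ z ∈ U, z ≠ (ε : ℂ) →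
      (z ^ 2 - (ε : ℂ) ^ 2) * (S z) ^ 2 - (2 * (ε : ℂ) ^ 2 + (α : ℂ) ^ 2) * z * S z -
        (ε : ℂ) ^ 2 * z ^ 2 = 0) :
    (∃ T : ℂ → ℂ, AnalyticAt ℂ T (ε : ℂ) ∧ T (ε : ℂ) ≠ 0 ∧
        ∀ᶠ z in nhdsWithin (ε : ℂ) {(ε : ℂ)}ᶜ, S z = T z / (z - (ε : ℂ))) ∧
      (∃ H : ℂ → ℂ, AnalyticAt ℂ H (ε : ℂ) ∧
        ∀ᶠ z in nhdsWithin (ε : ℂ) {(ε : ℂ)}ᶜ,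
          (S z - z) ^ 2 =
            (((α : ℂ) ^ 2 + 2 * (ε : ℂ) ^ 2) ^ 2 / 4) / (z - (ε : ℂ)) ^ 2 +
              ((α : ℂ) ^ 4 / (4 * (ε : ℂ))) / (z - (ε : ℂ)) + H z) ∧
      (α : ℂ) ^ 4 / (4 * (ε : ℂ)) ≠ 0 := by
  have hεC : (ε : ℂ) ≠ 0 := ofReal_ne_zero.mpr hε.ne'
  have hαC : (α : ℂ) ≠ 0 := ofReal_ne_zero.mpr hα.ne'
  have hnear : ∀ᶠ z in 𝓝[≠] (ε : ℂ), z ∈ interior U \ {(ε : ℂ)} :=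
    sdiff_mem_nhdsWithin_compl (interior_mem_nhds.mpr hU) _
  have hrel' := hnear.mono fun z hz => hrel z (interior_subset hz.1) hz.2
  have hd : ∀ᶠ z in 𝓝[≠] (ε : ℂ), DifferentiableAt ℂ S z := hnear.mono fun z hz =>
    (hS.mono (Set.sdiff_subset_sdiff_left interior_subset)).differentiableAt
      ((isOpen_interior.sdiff isClosed_singleton).mem_nhds hz)
  obtain ⟨T, hT, hTε, hST⟩ := exists_analyticAt_eq_div_sub_of_tendsto hd
    (tendsto_sub_mul_of_quadratic hεC hpole hrel')
  have hT' := deriv_eq_of_quadratic hT.differentiableAt hTε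
    (eventually_quadratic_of_eq_div hTε hST hrel')
  obtain ⟨H, hH, hSH⟩ := exists_sq_sub_eq_laurent hεC hT hTε hT' hST
  have hk : (2 * (ε : ℂ) ^ 2 + (α : ℂ) ^ 2) / 2 ≠ 0 := by
    exact_mod_cast (by positivity : (2 * ε ^ 2 + α ^ 2) / 2 ≠ 0)
  have hA : ((2 * (ε : ℂ) ^ 2 + (α : ℂ) ^ 2) / 2) ^ 2 = ((α : ℂ) ^ 2 + 2 * (ε : ℂ) ^ 2) ^ 2 / 4 := by
    ring
  have hB : ((2 * (ε : ℂ) ^ 2 + (α : ℂ) ^ 2) / 2 - (ε : ℂ) ^ 2) ^ 2 / (ε : ℂ) =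
      (α : ℂ) ^ 4 / (4 * (ε : ℂ)) := by
    field_simp
    ring
  refine ⟨⟨T, hT, hTε ▸ hk, hST⟩, ⟨H, hH, by simpa only [hA, hB] using hSH⟩, ?_⟩
  exact div_ne_zero (pow_ne_zero 4 hαC) (mul_ne_zero (by norm_num) hεC)
end

section
/- The limit, as δ → 0 through positive real values, of (1/δ)·(1/(2πi)) ∮_{|w|=1} (w² − 1)·(1 − |1 + δw²|) / w³ dw equals 1/2. -/
/-! Since `|1 + δw²|² = 1 + δ(w² + w⁻²) + δ²` on the unit circle, multiplying `1 - |1 + δw²|` by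
`1 + |1 + δw²|` exhibits the factor `δ`. After dividing it out, the integrand extends continuously
to `δ = 0`, where it is the Laurent polynomial `(w⁻¹ - w - w⁻³ + w⁻⁵) / 2`, of residue `1/2`. -/

open Complex Real Filter Metric Set ComplexConjugate

theorem continuous_circleIntegral {X E : Type*} [TopologicalSpace X] [NormedAddCommGroup E]
    [NormedSpace ℂ E] {f : X → ℂ → E} {c : ℂ} {R : ℝ}
    (hf : ContinuousOn (Function.uncurry f) (univ ×ˢ sphere c |R|)) :
    Continuous fun x => ∮ z in C(c, R), f x z := by
  refine intervalIntegral.continuous_parametric_intervalIntegral_of_continuous' ?_ _ _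
  simp only [deriv_circleMap]
  refine (continuous_circleMap 0 R |>.comp continuous_snd |>.mul continuous_const).smul ?_
  exact hf.comp_continuous (continuous_fst.prodMk (continuous_circleMap c R |>.comp continuous_snd))
    fun p => ⟨mem_univ _, circleMap_mem_sphere' c R p.2⟩

theorem circleIntegral_zpow (n : ℤ) {R : ℝ} (hR : R ≠ 0) :
    ∮ z in C(0, R), z ^ n = if n = -1 then 2 * π * I else 0 := by
  split_ifs with hn
  · simpa [hn] using circleIntegral.integral_sub_center_inv 0 hR
  · simpa using circleIntegral.integral_sub_zpow_of_ne hn 0 0 R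

theorem circleIntegrable_zpow (n : ℤ) {R : ℝ} (hR : R ≠ 0) :
    CircleIntegrable (fun z => z ^ n) 0 R := by
  simpa using (circleIntegrable_sub_zpow_iff (c := 0) (w := 0) (R := R) (n := n)).2
    (Or.inr (Or.inr (by simpa [eq_comm] using hR)))

theorem sq_norm_one_add_mul_sq_of_norm_eq_one (δ : ℝ) {w : ℂ} (hw : ‖w‖ = 1) :
    ((‖1 + δ * w ^ 2‖ : ℝ) : ℂ) ^ 2 = 1 + δ * (w ^ 2 + w⁻¹ ^ 2) + δ ^ 2 := by
  have hunit : w * conj w = 1 := by simp [mul_conj', hw]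
  rw [← mul_conj', inv_eq_conj hw]
  simp only [map_add, map_one, map_mul, map_pow, conj_ofReal]
  linear_combination δ ^ 2 * (w * conj w + 1) * hunit

noncomputable def rescaledIntegrand (δ : ℝ) (w : ℂ) : ℂ :=
  -((w ^ 2 - 1) * (w ^ 2 + w⁻¹ ^ 2 + δ)) / ((1 + ‖1 + δ * w ^ 2‖) * w ^ 3)

theorem inv_mul_eq_rescaledIntegrand {δ : ℝ} (hδ : δ ≠ 0) {w : ℂ} (hw : ‖w‖ = 1) :
    (δ : ℂ)⁻¹ * ((w ^ 2 - 1) * (1 - ((‖1 + (δ : ℂ) * w ^ 2‖ : ℝ) : ℂ)) / w ^ 3) =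
      rescaledIntegrand δ w := by
  have hs := sq_norm_one_add_mul_sq_of_norm_eq_one δ hw
  have h1s : (1 : ℂ) + ((‖1 + δ * w ^ 2‖ : ℝ) : ℂ) ≠ 0 := by
    exact_mod_cast (by positivity : (1 : ℝ) + ‖1 + δ * w ^ 2‖ ≠ 0)
  have hδ' : (δ : ℂ) ≠ 0 := ofReal_ne_zero.2 hδ
  have one_sub_norm : 1 - ((‖1 + (δ : ℂ) * w ^ 2‖ : ℝ) : ℂ) =
      -(δ * (w ^ 2 + w⁻¹ ^ 2 + δ)) / (1 + ((‖1 + δ * w ^ 2‖ : ℝ) : ℂ)) := by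
    rw [eq_div_iff h1s]
    linear_combination -hs
  rw [one_sub_norm, rescaledIntegrand]
  field_simp

theorem continuousOn_rescaledIntegrand :
    ContinuousOn (Function.uncurry rescaledIntegrand) {p | p.2 ≠ 0} := by
  have hden : ∀ p : ℝ × ℂ, p.2 ≠ 0 → ((1 : ℂ) + ‖1 + p.1 * p.2 ^ 2‖) * p.2 ^ 3 ≠ 0 := by
    intro p hp
    have : (1 : ℝ) + ‖1 + p.1 * p.2 ^ 2‖ ≠ 0 := by positivity
    exact mul_ne_zero (by exact_mod_cast this) (pow_ne_zero 3 hp)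
  unfold Function.uncurry rescaledIntegrand
  fun_prop (disch := first | exact fun p hp => hp | exact hden)

theorem circleIntegral_rescaledIntegrand_zero :
    ∮ w in C(0, 1), rescaledIntegrand 0 w = π * I := by
  have hlaurent : rescaledIntegrand 0 = fun w => (1 / 2 : ℂ) *
      (w ^ (-1 : ℤ) - w ^ (1 : ℤ) - w ^ (-3 : ℤ) + w ^ (-5 : ℤ)) := by
    funext w
    simp only [rescaledIntegrand, ofReal_zero, zero_mul, add_zero, norm_one, ofReal_one, inv_pow,
      zpow_neg, zpow_ofNat]
    field_simp
    ring
  have hi := fun n => circleIntegrable_zpow n one_ne_zero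
  have h₁ : CircleIntegrable (fun z : ℂ => z ^ (-1 : ℤ) - z ^ (1 : ℤ)) 0 1 := (hi _).sub (hi _)
  have h₂ : CircleIntegrable (fun z : ℂ => z ^ (-1 : ℤ) - z ^ (1 : ℤ) - z ^ (-3 : ℤ)) 0 1 :=
    h₁.sub (hi _)
  rw [hlaurent, circleIntegral.integral_const_mul,
    circleIntegral.integral_add h₂ (hi _), circleIntegral.integral_sub h₁ (hi _),
    circleIntegral.integral_sub (hi _) (hi _)]
  simp only [circleIntegral_zpow _ one_ne_zero]
  norm_num
  ring

/-- As `δ → 0⁺`,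
`(1/δ)·(1/(2πi)) ∮_{|w|=1} (w²−1)·(1 − |1+δw²|)/w³ dw → 1/2`. -/
theorem limit_of_difference_integral :
    Filter.Tendsto
      (fun δ : ℝ => ((δ : ℂ))⁻¹ * ((1 / (2 * Real.pi * Complex.I)) *
        ∮ w in C(0, 1), (w ^ 2 - 1) *
          (1 - ((‖1 + (δ : ℂ) * w ^ 2‖ : ℝ) : ℂ)) / w ^ 3))
      (nhdsWithin 0 (Set.Ioi 0)) (nhds (1 / 2)) := by
  have hcont : Continuous fun δ : ℝ => ∮ w in C(0, 1), rescaledIntegrand δ w :=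
    continuous_circleIntegral <| continuousOn_rescaledIntegrand.mono fun p hp =>
      ne_zero_of_mem_sphere one_ne_zero ⟨p.2, by simpa using hp.2⟩
  have hlim : Tendsto (fun δ : ℝ => (1 / (2 * π * I)) * ∮ w in C(0, 1), rescaledIntegrand δ w)
      (nhdsWithin 0 (Ioi 0)) (nhds (1 / 2)) := by
    have h := ((hcont.tendsto 0).const_mul (1 / (2 * π * I))).mono_left
      (nhdsWithin_le_nhds (s := Ioi 0))
    have hval : 1 / (2 * π * I) * (π * I) = (1 / 2 : ℂ) := by
      field_simp [ofReal_ne_zero.2 pi_ne_zero]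
    rwa [circleIntegral_rescaledIntegrand_zero, hval] at h
  refine hlim.congr' ?_
  filter_upwards [self_mem_nhdsWithin] with δ (hδ : 0 < δ)
  rw [mul_left_comm (δ : ℂ)⁻¹, ← circleIntegral.integral_const_mul (δ : ℂ)⁻¹]
  congr 1
  refine circleIntegral.integral_congr zero_le_one fun w hw => ?_
  exact (inv_mul_eq_rescaledIntegrand hδ.ne' (by simpa using hw)).symm
end

section
/- Let a > 0, 0 < b < 1, and let r > 0 be small enough that the closed ball of radius r centered at b avoids the points −b, 1/b, −1/b. Define g(w) = (w² − 1)²·(w² + a²)·(1 + a²w²) / ((w² − b²)²·(1 − b²w²)²), and let f be analytic on the open ball B(b,r). Then for every ρ with 0 < ρ < r: (1/(4πi)) ∮_{|w−b|=ρ} g(w)·(f(w) − f(b))·f′(w) dw = (1/2) · ((b² − 1)²·(b² + a²)·(1 + a²b²) / (4b²·(1 − b⁴)²)) · f′(b)². -/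
/-!
Since `(w² − b²)² = (w − b)²(w + b)²`, the integrand is `G(w)/(w − b)² · (f(w) − f(b)) · f′(w)`
with `G` holomorphic near the closed disc (this is where the three avoided points enter).
Writing `f(w) − f(b) = (w − b) · dslope f b w`, it becomes `(w − b)⁻¹` times the holomorphic
function `G · dslope f b · f′`, so the Cauchy integral formula evaluates it as
`2πi G(b) f′(b)²`, and `G(b) = (b² − 1)²(b² + a²)(1 + a²b²)/(4b²(1 − b⁴)²)`.
-/

open Complex Metric Real

theorem one_sub_sq_mul_sq_ne_zero {K : Type*} [Field K] {b z : K} (hz : z ≠ b⁻¹)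
    (hz' : z ≠ -b⁻¹) : 1 - b ^ 2 * z ^ 2 ≠ 0 := by
  intro h
  have : (b * z - 1) * (b * z + 1) = 0 := by linear_combination -h
  rcases mul_eq_zero.1 this with h | h
  · exact hz (eq_inv_of_mul_eq_one_right (sub_eq_zero.1 h))
  · exact hz' (neg_eq_iff_eq_neg.1 (eq_inv_of_mul_eq_one_right (by linear_combination -h)))

/-- Cauchy's integral formula applied to `g · dslope f c · f′`. -/
theorem circleIntegral_div_sub_sq_mul_sub_mul_deriv {c : ℂ} {r ρ : ℝ} {g f : ℂ → ℂ}
    (hg : DifferentiableOn ℂ g (ball c r)) (hf : DifferentiableOn ℂ f (ball c r))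
    (hρ : 0 < ρ) (hρr : ρ < r) :
    (∮ w in C(c, ρ), g w / (w - c) ^ 2 * (f w - f c) * deriv f w) =
      2 * π * I * (g c * deriv f c ^ 2) := by
  set F : ℂ → ℂ := fun w => g w * dslope f c w * deriv f w
  have hF : DifferentiableOn ℂ F (ball c r) :=
    (hg.mul ((differentiableOn_dslope (ball_mem_nhds c (hρ.trans hρr))).2 hf)).mul
      ((hf.analyticOnNhd isOpen_ball).deriv.differentiableOn)
  have hFcl : DiffContOnCl ℂ F (ball c ρ) := by
    refine DifferentiableOn.diffContOnCl ?_
    rw [closure_ball c hρ.ne']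
    exact hF.mono (closedBall_subset_ball hρr)
  have hintegrand : Set.EqOn (fun w => g w / (w - c) ^ 2 * (f w - f c) * deriv f w)
      (fun w => (w - c)⁻¹ • F w) (sphere c ρ) := by
    intro w hw
    have hwc : w - c ≠ 0 := sub_ne_zero.2 (ne_of_mem_sphere hw hρ.ne')
    simp only [F, smul_eq_mul, dslope_of_ne f (sub_ne_zero.1 hwc), slope_def_field]
    field_simp
  rw [circleIntegral.integral_congr hρ.le hintegrand,
    hFcl.circleIntegral_sub_inv_smul (mem_ball_self hρ)]
  simp only [F, dslope_same, smul_eq_mul]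
  ring

theorem quadrature_weight_formula_general (a b r : ℝ)
    (havoid : (-(b : ℂ)) ∉ closedBall (b : ℂ) r ∧ ((b : ℂ)⁻¹) ∉ closedBall (b : ℂ) r ∧
      (-(b : ℂ)⁻¹) ∉ closedBall (b : ℂ) r)
    (f : ℂ → ℂ) (hf : DifferentiableOn ℂ f (ball (b : ℂ) r))
    (ρ : ℝ) (hρ : 0 < ρ) (hρr : ρ < r) :
    (1 / (4 * Real.pi * Complex.I)) *
        (∮ w in C((b : ℂ), ρ),
          ((w ^ 2 - 1) ^ 2 * (w ^ 2 + (a : ℂ) ^ 2) * (1 + (a : ℂ) ^ 2 * w ^ 2) /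
              ((w ^ 2 - (b : ℂ) ^ 2) ^ 2 * (1 - (b : ℂ) ^ 2 * w ^ 2) ^ 2)) *
            (f w - f b) * deriv f w) =
      (1 / 2) *
        (((b : ℂ) ^ 2 - 1) ^ 2 * ((b : ℂ) ^ 2 + (a : ℂ) ^ 2) * (1 + (a : ℂ) ^ 2 * (b : ℂ) ^ 2) /
          (4 * (b : ℂ) ^ 2 * (1 - (b : ℂ) ^ 4) ^ 2)) * (deriv f b) ^ 2 := by
  obtain ⟨hneg, hinv, hneginv⟩ := havoid
  set G : ℂ → ℂ := fun w => (w ^ 2 - 1) ^ 2 * (w ^ 2 + (a : ℂ) ^ 2) * (1 + (a : ℂ) ^ 2 * w ^ 2) /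
    ((w + b) ^ 2 * (1 - (b : ℂ) ^ 2 * w ^ 2) ^ 2)
  have hG : DifferentiableOn ℂ G (ball (b : ℂ) r) := by
    refine DifferentiableOn.div (by fun_prop) (by fun_prop) fun z hz => ?_
    have hz := ball_subset_closedBall hz
    have hplus : z + b ≠ 0 := fun h => hneg (eq_neg_of_add_eq_zero_left h ▸ hz)
    exact mul_ne_zero (pow_ne_zero _ hplus) <| pow_ne_zero _ <|
      one_sub_sq_mul_sq_ne_zero (fun h => hinv (h ▸ hz)) (fun h => hneginv (h ▸ hz))
  have hintegrand : ∀ w : ℂ, (w ^ 2 - 1) ^ 2 * (w ^ 2 + (a : ℂ) ^ 2) * (1 + (a : ℂ) ^ 2 * w ^ 2) /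
      ((w ^ 2 - (b : ℂ) ^ 2) ^ 2 * (1 - (b : ℂ) ^ 2 * w ^ 2) ^ 2) = G w / (w - b) ^ 2 := by
    intro w
    simp only [G, div_div]
    ring
  have hGb : G b = ((b : ℂ) ^ 2 - 1) ^ 2 * ((b : ℂ) ^ 2 + (a : ℂ) ^ 2) *
      (1 + (a : ℂ) ^ 2 * (b : ℂ) ^ 2) / (4 * (b : ℂ) ^ 2 * (1 - (b : ℂ) ^ 4) ^ 2) := by
    simp only [G]
    ring
  simp only [hintegrand]
  rw [circleIntegral_div_sub_sq_mul_sub_mul_deriv hG hf hρ hρr, hGb]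
  field_simp [Real.pi_ne_zero, I_ne_zero]
  ring

/-- Let `a > 0`, `0 < b < 1`, and `r > 0` small enough that the closed ball of
radius `r` about `b` avoids `−b`, `1/b`, `−1/b`.  With
`g(w) = (w²−1)²(w²+a²)(1+a²w²)/((w²−b²)²(1−b²w²)²)` and `f` analytic on `B(b,r)`,
for every `0 < ρ < r`:
`(1/(4πi)) ∮_{|w−b|=ρ} g(w)(f(w) − f(b))f′(w) dw
  = (1/2)·((b²−1)²(b²+a²)(1+a²b²)/(4b²(1−b⁴)²))·f′(b)²`. -/
theorem quadrature_weight_formula (a b r : ℝ) (ha : 0 < a) (hb0 : 0 < b) (hb1 : b < 1)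
    (hr : 0 < r)
    (havoid : (-(b : ℂ)) ∉ closedBall (b : ℂ) r ∧ ((b : ℂ)⁻¹) ∉ closedBall (b : ℂ) r ∧
      (-(b : ℂ)⁻¹) ∉ closedBall (b : ℂ) r)
    (f : ℂ → ℂ) (hf : DifferentiableOn ℂ f (ball (b : ℂ) r))
    (ρ : ℝ) (hρ : 0 < ρ) (hρr : ρ < r) :
    (1 / (4 * Real.pi * Complex.I)) *
        (∮ w in C((b : ℂ), ρ),
          ((w ^ 2 - 1) ^ 2 * (w ^ 2 + (a : ℂ) ^ 2) * (1 + (a : ℂ) ^ 2 * w ^ 2) /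
              ((w ^ 2 - (b : ℂ) ^ 2) ^ 2 * (1 - (b : ℂ) ^ 2 * w ^ 2) ^ 2)) *
            (f w - f b) * deriv f w) =
      (1 / 2) *
        (((b : ℂ) ^ 2 - 1) ^ 2 * ((b : ℂ) ^ 2 + (a : ℂ) ^ 2) * (1 + (a : ℂ) ^ 2 * (b : ℂ) ^ 2) /
          (4 * (b : ℂ) ^ 2 * (1 - (b : ℂ) ^ 4) ^ 2)) * (deriv f b) ^ 2 :=
  quadrature_weight_formula_general a b r havoid f hf ρ hρ hρr
end
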